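/- arXiv:1503.02265 — 2 statements merged into one kernel-verified Lean document; each statement's English description precedes it below -/
import Mathlib

section
/- Let R be a ring, n ≥ 0, and let E, F be R-modules given with presentations r_E : P_E → E and r_F : P_F → F, where P_E is projective, K_E = ker(r_E), K_F = ker(r_F). Form the Moore complexes M(E,n) (K_E in degree n+1, P_E in degree n, differential the inclusion) and M(F,n). Then the map sending a chain map u : M(E,n) → M(F,n) to the induced homomorphism H_n(u) : E → F (under the identifications H_n(M(E,n)) = E and H_n(M(F,n)) = F) induces a bijection between chain homotopy classes of chain maps M(E,n) → M(F,n) and Hom_R(E,F). -/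
/- Given an `R`-module `G` with a surjection `r : P → G` and `K = ker r`, the Moore
complex `M(G,n)` is the chain complex with `K` in degree `n+1`, `P` in degree `n`,
differential the inclusion `K ↪ P`, and `0` elsewhere.  A chain map
`u : M(E,n) → M(F,n)` is a family `u m` commuting with the differentials, and two
chain maps are chain homotopic if their difference is `∂∘S + S∘∂` for a degree `+1`
family `S`.  The induced homomorphism `H_n(u) : E → F` (under the identifications
`H_n(M(E,n)) = E`, `H_n(M(F,n)) = F` coming from `r_E, r_F`) is the unique
`φ : E → F` with `φ ∘ r_E = r_F ∘ u_n`. -/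

variable (R : Type*) [Ring R]

section
variable {P G : Type*} [AddCommGroup P] [Module R P] [AddCommGroup G] [Module R G]

/-- Graded pieces of the Moore complex `M(G,n)`: `ker r` in degree `n+1`, `P` (as the
submodule `⊤` of itself) in degree `n`, `0` elsewhere. -/
noncomputable def mooreS (r : P →ₗ[R] G) (n m : ℤ) : Submodule R P :=
  if m = n then ⊤ else if m = n + 1 then LinearMap.ker r else ⊥

/-- The degree-`m` piece of the Moore complex `M(G,n)`. -/
abbrev Moore (r : P →ₗ[R] G) (n m : ℤ) : Type _ := ↥(mooreS R r n m)

/-- Differential of the Moore complex: the inclusion `K ↪ P` from degree `n+1` to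
degree `n`, and `0` elsewhere. -/
noncomputable def mooreD (r : P →ₗ[R] G) (n m : ℤ) :
    Moore R r n (m+1) →ₗ[R] Moore R r n m :=
  if h : m = n then
    Submodule.inclusion (by
      subst h
      have : mooreS R r m m = ⊤ := if_pos rfl
      rw [this]; exact le_top)
  else 0

/-- The canonical isomorphism `P ≃ M(G,n)_n`, as a linear map. -/
noncomputable def inclTop (r : P →ₗ[R] G) (n : ℤ) : P →ₗ[R] Moore R r n n :=
  LinearMap.codRestrict (mooreS R r n n) LinearMap.id (fun _ => by
    have : mooreS R r n n = ⊤ := if_pos rfl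
    rw [this]; exact Submodule.mem_top)

end

variable {PE PF E F : Type*}
  [AddCommGroup PE] [Module R PE] [AddCommGroup PF] [Module R PF]
  [AddCommGroup E] [Module R E] [AddCommGroup F] [Module R F]
  (rE : PE →ₗ[R] E) (rF : PF →ₗ[R] F) (n : ℤ)

/-- `u` is a chain map `M(E,n) → M(F,n)`. -/
def IsChainMap (u : ∀ m : ℤ, Moore R rE n m →ₗ[R] Moore R rF n m) : Prop :=
  ∀ m : ℤ, (mooreD R rF n m).comp (u (m+1)) = (u m).comp (mooreD R rE n m)

/-- The map `P_E → P_F` carried by `u` in degree `n`. -/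
noncomputable def ind (u : ∀ m : ℤ, Moore R rE n m →ₗ[R] Moore R rF n m) :
    PE →ₗ[R] PF :=
  ((mooreS R rF n n).subtype).comp ((u n).comp (inclTop R rE n))

/-- Chain homotopy of chain maps `M(E,n) → M(F,n)`. -/
def Homotopic (u v : ∀ m : ℤ, Moore R rE n m →ₗ[R] Moore R rF n m) : Prop :=
  ∃ S : ∀ m : ℤ, Moore R rE n m →ₗ[R] Moore R rF n (m+1),
    ∀ m : ℤ, u (m+1) - v (m+1)
      = (mooreD R rF n (m+1)).comp (S (m+1)) + (S m).comp (mooreD R rE n m)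

/-! A chain map `u : M(E,n) → M(F,n)` is determined by its degree-`n` component `f : P_E → P_F`,
which must carry `K_E` into `K_F` (its degree-`n+1` component is then the restriction of `f`),
and every such `f` arises.  A homotopy has at most one nonzero component, `S_n : P_E → K_F`, so
`u ≃ v` iff `u_n - v_n` lands in `K_F`, i.e. iff `r_F ∘ u_n = r_F ∘ v_n`, i.e. iff `u` and `v`
induce the same map `E → F`.  Every `φ : E → F` is induced: lift `φ ∘ r_E` along `r_F` using
projectivity of `P_E`. -/

theorem LinearMap.exists_comp_eq_of_ker_le {R M N Q : Type*} [Ring R] [AddCommGroup M]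
    [Module R M] [AddCommGroup N] [Module R N] [AddCommGroup Q] [Module R Q]
    {f : M →ₗ[R] N} (hf : Function.Surjective f) {g : M →ₗ[R] Q} (h : ker f ≤ ker g) :
    ∃ φ : N →ₗ[R] Q, φ ∘ₗ f = g :=
  ⟨(ker f).liftQ g h ∘ₗ (f.quotKerEquivOfSurjective hf).symm.toLinearMap, by
    ext x
    have : (f.quotKerEquivOfSurjective hf).symm (f x) = (ker f).mkQ x :=
      (LinearEquiv.symm_apply_eq _).2 rfl
    simp [this]⟩

section MooreComplex

variable {R} {n}
variable {P G : Type*} [AddCommGroup P] [Module R P] [AddCommGroup G] [Module R G]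
  {r : P →ₗ[R] G} {m : ℤ}

theorem mooreS_self : mooreS R r n n = ⊤ := if_pos rfl

theorem mooreS_succ : mooreS R r n (n + 1) = LinearMap.ker r := by
  rw [mooreS, if_neg (by omega), if_pos rfl]

theorem mooreS_of_ne (h₀ : m ≠ n) (h₁ : m ≠ n + 1) : mooreS R r n m = ⊥ := by
  rw [mooreS, if_neg h₀, if_neg h₁]

theorem mem_mooreS_succ {x : P} : x ∈ mooreS R r n (n + 1) ↔ r x = 0 := by
  rw [mooreS_succ, LinearMap.mem_ker]

theorem moore_eq_zero_of_ne (h₀ : m ≠ n) (h₁ : m ≠ n + 1) (x : Moore R r n m) : x = 0 :=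
  Subtype.ext <| (Submodule.mem_bot R).1 <| by simpa only [mooreS_of_ne h₀ h₁] using x.2

theorem mooreD_of_ne (h : m ≠ n) : mooreD R r n m = 0 := dif_neg h

@[simp]
theorem coe_mooreD_self (x : Moore R r n (n + 1)) : (mooreD R r n n x : P) = x := by
  rw [mooreD, dif_pos rfl]
  rfl

@[simp]
theorem coe_inclTop (x : P) : (inclTop R r n x : P) = x := rfl

end MooreComplex

section ChainMaps

variable {R rE rF n}

variable (n) in
noncomputable def mooreMap (f : PE →ₗ[R] PF) (hf : LinearMap.ker rE ≤ LinearMap.ker (rF ∘ₗ f))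
    (m : ℤ) : Moore R rE n m →ₗ[R] Moore R rF n m :=
  f.restrict fun x hx => by
    by_cases h₀ : m = n
    · subst h₀
      simp [mooreS_self]
    by_cases h₁ : m = n + 1
    · subst h₁
      exact mem_mooreS_succ.2 (hf (mem_mooreS_succ.1 hx))
    · rw [mooreS_of_ne h₀ h₁] at hx ⊢
      rw [(Submodule.mem_bot R).1 hx, map_zero]
      exact zero_mem _

theorem isChainMap_mooreMap {f : PE →ₗ[R] PF} (hf : LinearMap.ker rE ≤ LinearMap.ker (rF ∘ₗ f)) :
    IsChainMap R rE rF n (mooreMap n f hf) := by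
  intro m
  by_cases h : m = n
  · subst h
    ext x
    simp [mooreMap]
  · simp [mooreD_of_ne h]

theorem ind_mooreMap {f : PE →ₗ[R] PF} (hf : LinearMap.ker rE ≤ LinearMap.ker (rF ∘ₗ f)) :
    ind R rE rF n (mooreMap n f hf) = f := rfl

variable (rE n) in
noncomputable def mooreHomotopy (g : PE →ₗ[R] PF) (hg : rF ∘ₗ g = 0) (m : ℤ) :
    Moore R rE n m →ₗ[R] Moore R rF n (m + 1) :=
  if h : m = n then
    LinearMap.codRestrict _ (g ∘ₗ Submodule.subtype _) fun x => by
      subst h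
      exact mem_mooreS_succ.2 (LinearMap.congr_fun hg _)
  else 0

theorem coe_mooreHomotopy_self {g : PE →ₗ[R] PF} (hg : rF ∘ₗ g = 0) (x : Moore R rE n n) :
    (mooreHomotopy rE n g hg n x : PF) = g x := by
  rw [mooreHomotopy, dif_pos rfl]
  rfl

variable {u v : ∀ m : ℤ, Moore R rE n m →ₗ[R] Moore R rF n m}

theorem coe_apply_self (x : Moore R rE n n) : (u n x : PF) = ind R rE rF n u x := rfl

theorem IsChainMap.coe_apply_succ (hu : IsChainMap R rE rF n u) (x : Moore R rE n (n + 1)) :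
    (u (n + 1) x : PF) = ind R rE rF n u x := by
  rw [← coe_mooreD_self (u (n + 1) x), ← LinearMap.comp_apply, hu n, LinearMap.comp_apply,
    coe_apply_self, coe_mooreD_self]

theorem IsChainMap.ker_le_ker_comp_ind (hu : IsChainMap R rE rF n u) :
    LinearMap.ker rE ≤ LinearMap.ker (rF ∘ₗ ind R rE rF n u) := fun x hx => by
  have hx' : x ∈ mooreS R rE n (n + 1) := mem_mooreS_succ.2 hx
  have := mem_mooreS_succ.1 (u (n + 1) ⟨x, hx'⟩).2
  rwa [hu.coe_apply_succ] at this

theorem Homotopic.comp_ind_eq (h : Homotopic R rE rF n u v) :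
    rF ∘ₗ ind R rE rF n u = rF ∘ₗ ind R rE rF n v := by
  obtain ⟨S, hS⟩ := h
  obtain ⟨m, rfl⟩ : ∃ m, m + 1 = n := ⟨n - 1, by ring⟩
  ext x
  have hx := congrArg Subtype.val (LinearMap.congr_fun (hS m) (inclTop R rE (m + 1) x))
  simp only [mooreD_of_ne (show m ≠ m + 1 by omega), LinearMap.comp_zero, add_zero,
    LinearMap.sub_apply, LinearMap.comp_apply, Submodule.coe_sub, coe_apply_self,
    coe_mooreD_self, coe_inclTop] at hx
  rw [LinearMap.comp_apply, LinearMap.comp_apply, ← sub_eq_zero, ← map_sub, hx]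
  exact mem_mooreS_succ.1 (S (m + 1) _).2

theorem homotopic_of_comp_ind_eq (hu : IsChainMap R rE rF n u) (hv : IsChainMap R rE rF n v)
    (h : rF ∘ₗ ind R rE rF n u = rF ∘ₗ ind R rE rF n v) : Homotopic R rE rF n u v := by
  refine ⟨mooreHomotopy rE n (ind R rE rF n u - ind R rE rF n v)
    (by rw [LinearMap.comp_sub, h, sub_self]), fun m => ?_⟩
  by_cases h₀ : m = n
  · subst h₀
    ext x
    simp [mooreD_of_ne (show m + 1 ≠ m by omega), hu.coe_apply_succ, hv.coe_apply_succ,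
      coe_mooreHomotopy_self]
  by_cases h₁ : m + 1 = n
  · subst h₁
    ext x
    simp [mooreD_of_ne (show m ≠ m + 1 by omega), coe_apply_self, coe_mooreHomotopy_self]
  · ext x
    simp [moore_eq_zero_of_ne h₁ (by omega) x]

theorem homotopic_iff_comp_ind_eq (hu : IsChainMap R rE rF n u) (hv : IsChainMap R rE rF n v) :
    Homotopic R rE rF n u v ↔ rF ∘ₗ ind R rE rF n u = rF ∘ₗ ind R rE rF n v :=
  ⟨Homotopic.comp_ind_eq, homotopic_of_comp_ind_eq hu hv⟩

end ChainMaps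

theorem statement13
    (hrE : Function.Surjective rE) (hrF : Function.Surjective rF)
    [Module.Projective R PE] :
    (∀ u, IsChainMap R rE rF n u →
        ∃ φ : E →ₗ[R] F, φ.comp rE = rF.comp (ind R rE rF n u)) ∧
    (∀ u v, IsChainMap R rE rF n u → IsChainMap R rE rF n v →
      ∀ φ ψ : E →ₗ[R] F,
        φ.comp rE = rF.comp (ind R rE rF n u) →
        ψ.comp rE = rF.comp (ind R rE rF n v) →
          (Homotopic R rE rF n u v ↔ φ = ψ)) ∧
    (∀ φ : E →ₗ[R] F, ∃ u, IsChainMap R rE rF n u ∧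
        φ.comp rE = rF.comp (ind R rE rF n u)) := by
  refine ⟨fun u hu => LinearMap.exists_comp_eq_of_ker_le hrE hu.ker_le_ker_comp_ind,
    fun u v hu hv φ ψ hφ hψ => ?_, fun φ => ?_⟩
  · rw [homotopic_iff_comp_ind_eq hu hv, ← hφ, ← hψ, LinearMap.cancel_right hrE]
  · obtain ⟨f, hf⟩ := Module.projective_lifting_property rF (φ ∘ₗ rE) hrF
    have hker : LinearMap.ker rE ≤ LinearMap.ker (rF ∘ₗ f) :=
      hf ▸ LinearMap.ker_le_ker_comp rE φ
    exact ⟨mooreMap n f hker, isChainMap_mooreMap hker, by rw [ind_mooreMap, hf]⟩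
end

section
/- Consider the chain complexes of abelian groups: A with A_1 = A_0 = ℤ and differential multiplication by 2; B with B_1 = B_0 = ℤ and differential multiplication by 4; C with C_1 = C_0 = ℤ and differential multiplication by 2; D with D_2 = D_1 = ℤ and differential multiplication by 2 (all other terms 0). Let f : A → B have f_1 = 1 and f_0 = 2, let g : B → C have g_1 = 2 and g_0 = 1, and let h : C → D have h_1 = 1 : C_1 → D_1 (and all other components 0). Then f, g, h are chain maps, g∘f and h∘g are nullhomotopic, and for EVERY nullhomotopy S of g∘f and EVERY nullhomotopy T of h∘g, the Toda map φ(S,T) : ΣA → D is not chain homotopic to zero. (Hence the Toda bracket ⟨h,g,f⟩ does not vanish.) -/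
/-! STATEMENT 16.  Chain complexes of abelian groups are encoded as families
`M r : ℤ → Type`, `(M r) m = Fin (r m) → ℤ` (so `r m` copies of `ℤ` in degree `m`),
with differentials `d m : (M r) (m+1) →ₗ[ℤ] (M r) m` given by integer matrices. -/

abbrev M (r : ℤ → ℕ) (m : ℤ) : Type := Fin (r m) → ℤ

/-- ranks: A has ℤ in degrees 0 and 1 -/
def rA : ℤ → ℕ := fun m => if m = 0 ∨ m = 1 then 1 else 0
def rB : ℤ → ℕ := fun m => if m = 0 ∨ m = 1 then 1 else 0
def rC : ℤ → ℕ := fun m => if m = 0 ∨ m = 1 then 1 else 0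
def rD : ℤ → ℕ := fun m => if m = 1 ∨ m = 2 then 1 else 0

/-- A = (ℤ --2--> ℤ) in degrees 1 → 0 -/
noncomputable def dA (m : ℤ) : M rA (m+1) →ₗ[ℤ] M rA m :=
  Matrix.mulVecLin (Matrix.of fun _ _ => if m = 0 then (2:ℤ) else 0)

noncomputable def dB (m : ℤ) : M rB (m+1) →ₗ[ℤ] M rB m :=
  Matrix.mulVecLin (Matrix.of fun _ _ => if m = 0 then (4:ℤ) else 0)

noncomputable def dC (m : ℤ) : M rC (m+1) →ₗ[ℤ] M rC m :=
  Matrix.mulVecLin (Matrix.of fun _ _ => if m = 0 then (2:ℤ) else 0)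

/-- D = (ℤ --2--> ℤ) in degrees 2 → 1 -/
noncomputable def dD (m : ℤ) : M rD (m+1) →ₗ[ℤ] M rD m :=
  Matrix.mulVecLin (Matrix.of fun _ _ => if m = 1 then (2:ℤ) else 0)

/-- f : A → B with f₁ = 1, f₀ = 2 -/
noncomputable def fm (m : ℤ) : M rA m →ₗ[ℤ] M rB m :=
  Matrix.mulVecLin (Matrix.of fun _ _ => if m = 1 then (1:ℤ) else if m = 0 then 2 else 0)

/-- g : B → C with g₁ = 2, g₀ = 1 -/
noncomputable def gm (m : ℤ) : M rB m →ₗ[ℤ] M rC m :=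
  Matrix.mulVecLin (Matrix.of fun _ _ => if m = 1 then (2:ℤ) else if m = 0 then 1 else 0)

/-- h : C → D with h₁ = 1 (and all other components 0) -/
noncomputable def hm (m : ℤ) : M rC m →ₗ[ℤ] M rD m :=
  Matrix.mulVecLin (Matrix.of fun _ _ => if m = 1 then (1:ℤ) else 0)

/-
All the maps involved are constant integer matrices between copies of `ℤ` (or `0`), and composing
two of them multiplies the entries and the rank of the middle term; so the identities saying that
`A, B, C, D` are complexes, that `f, g, h` are chain maps and that `S₀ = 1`, `T₁ = 1` are
nullhomotopies of `g ∘ f` and `h ∘ g` come down to arithmetic of the entries.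

For the Toda map: since `C₂ = 0`, the nullhomotopy equation of `g ∘ f` in degree 1 reads
`2 = g₁ f₁ = S₀ ∂_A = 2 S₀`, so every nullhomotopy has `S₀ = 1`. As `∂_A` vanishes out of `A₀`,
a nullhomotopy `U` of `φ(S,T)` would give in degree 1 the equation
`1 - 2 T₀ = h₁ S₀ - T₀ f₀ = ∂_D U₀ = 2 U₀` in `ℤ`, which is impossible modulo 2.
-/

open Matrix

section ConstantMatrix

variable {R : Type*} [CommSemiring R] {l m n : Type*} [Fintype n]

theorem mulVecLin_of_const_zero : (of fun (_ : m) (_ : n) => (0 : R)).mulVecLin = 0 :=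
  mulVecLin_zero

theorem mulVecLin_of_const_apply_one (c : R) :
    (of fun (_ : m) (_ : n) => c).mulVecLin (fun _ => 1) = (Fintype.card n * c) • fun _ => 1 := by
  ext; simp [mulVec, dotProduct, mul_comm]

theorem mulVecLin_of_const_apply (c : R) (v : n → R) (i : m) :
    (of fun (_ : m) (_ : n) => c).mulVecLin v i = c * ∑ j, v j := by
  simp [mulVec, dotProduct, Finset.mul_sum]

theorem mulVecLin_of_const_add (a b : R) :
    (of fun (_ : m) (_ : n) => a).mulVecLin + (of fun (_ : m) (_ : n) => b).mulVecLin =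
      (of fun _ _ => a + b).mulVecLin := by
  rw [← mulVecLin_add]; rfl

theorem mulVecLin_of_const_comp [Fintype m] (a b : R) :
    (of fun (_ : l) (_ : m) => a).mulVecLin ∘ₗ (of fun (_ : m) (_ : n) => b).mulVecLin =
      (of fun _ _ => (Fintype.card m : R) * (a * b)).mulVecLin := by
  rw [← mulVecLin_mul]; congr 1; ext; simp [mul_apply]

end ConstantMatrix

theorem dA_comp_dA (m : ℤ) : (dA m).comp (dA (m+1)) = 0 := by
  rw [dA, dA, mulVecLin_of_const_comp, ← mulVecLin_of_const_zero]
  congr 2; funext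
  simp only [Fintype.card_fin]
  simp only [rA]
  split_ifs <;> simp_all

theorem dB_comp_dB (m : ℤ) : (dB m).comp (dB (m+1)) = 0 := by
  rw [dB, dB, mulVecLin_of_const_comp, ← mulVecLin_of_const_zero]
  congr 2; funext
  simp only [Fintype.card_fin]
  simp only [rB]
  split_ifs <;> simp_all

theorem dC_comp_dC (m : ℤ) : (dC m).comp (dC (m+1)) = 0 := by
  rw [dC, dC, mulVecLin_of_const_comp, ← mulVecLin_of_const_zero]
  congr 2; funext
  simp only [Fintype.card_fin]
  simp only [rC]
  split_ifs <;> simp_all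

theorem dD_comp_dD (m : ℤ) : (dD m).comp (dD (m+1)) = 0 := by
  rw [dD, dD, mulVecLin_of_const_comp, ← mulVecLin_of_const_zero]
  congr 2; funext
  simp only [Fintype.card_fin]
  simp only [rD]
  split_ifs <;> simp_all

theorem dB_comp_fm (m : ℤ) : (dB m).comp (fm (m+1)) = (fm m).comp (dA m) := by
  rw [dB, fm, fm, dA, mulVecLin_of_const_comp, mulVecLin_of_const_comp]
  congr 2; funext
  simp only [Fintype.card_fin]
  simp only [rA, rB]
  split_ifs <;> simp_all

theorem dC_comp_gm (m : ℤ) : (dC m).comp (gm (m+1)) = (gm m).comp (dB m) := by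
  rw [dC, gm, gm, dB, mulVecLin_of_const_comp, mulVecLin_of_const_comp]
  congr 2; funext
  simp only [Fintype.card_fin]
  simp only [rB, rC]
  split_ifs <;> simp_all

theorem dD_comp_hm (m : ℤ) : (dD m).comp (hm (m+1)) = (hm m).comp (dC m) := by
  rw [dD, hm, hm, dC, mulVecLin_of_const_comp, mulVecLin_of_const_comp]
  congr 2; funext
  simp only [Fintype.card_fin]
  simp only [rC, rD]
  split_ifs <;> simp_all

noncomputable def nullhomotopyGF (t : ℤ) : M rA t →ₗ[ℤ] M rC (t+1) :=
  mulVecLin (of fun _ _ => if t = 0 then 1 else 0)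

noncomputable def nullhomotopyHG (t : ℤ) : M rB t →ₗ[ℤ] M rD (t+1) :=
  mulVecLin (of fun _ _ => if t = 1 then 1 else 0)

theorem gm_comp_fm_eq (t : ℤ) :
    (gm (t+1)).comp (fm (t+1)) =
      (dC (t+1)).comp (nullhomotopyGF (t+1)) + (nullhomotopyGF t).comp (dA t) := by
  rw [gm, fm, dC, dA, nullhomotopyGF, nullhomotopyGF, mulVecLin_of_const_comp,
    mulVecLin_of_const_comp, mulVecLin_of_const_comp, mulVecLin_of_const_add]
  congr 2; funext
  simp only [Fintype.card_fin]
  simp only [rA, rB, rC]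
  split_ifs <;> simp_all

theorem hm_comp_gm_eq (t : ℤ) :
    (hm (t+1)).comp (gm (t+1)) =
      (dD (t+1)).comp (nullhomotopyHG (t+1)) + (nullhomotopyHG t).comp (dB t) := by
  rw [hm, gm, dD, dB, nullhomotopyHG, nullhomotopyHG, mulVecLin_of_const_comp,
    mulVecLin_of_const_comp, mulVecLin_of_const_comp, mulVecLin_of_const_add]
  congr 2; funext
  simp only [Fintype.card_fin]
  simp only [rB, rC, rD]
  split_ifs <;> simp_all

theorem nullhomotopy_gf_zero_apply_one (S : ∀ t : ℤ, M rA t →ₗ[ℤ] M rC (t+1))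
    (hS : ∀ t : ℤ, (gm (t+1)).comp (fm (t+1)) = (dC (t+1)).comp (S (t+1)) + (S t).comp (dA t)) :
    S 0 (fun _ => 1) = fun _ => 1 := by
  have h := LinearMap.congr_fun (hS 0) (fun _ => 1)
  rw [LinearMap.comp_apply, LinearMap.add_apply, LinearMap.comp_apply, LinearMap.comp_apply] at h
  simp only [gm, fm, dC, dA, mulVecLin_of_const_apply_one, map_smul] at h
  simp [rA, rB, mulVecLin_of_const_zero, -zsmul_eq_mul] at h
  exact h.symm

theorem not_exists_toda_homotopy (S : ∀ t : ℤ, M rA t →ₗ[ℤ] M rC (t+1))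
    (T : ∀ t : ℤ, M rB t →ₗ[ℤ] M rD (t+1))
    (hS : ∀ t : ℤ, (gm (t+1)).comp (fm (t+1)) = (dC (t+1)).comp (S (t+1)) + (S t).comp (dA t)) :
    ¬ ∃ U : ∀ t : ℤ, M rA t →ₗ[ℤ] M rD (t+1+1),
      ∀ t : ℤ, (hm (t+1+1)).comp (S (t+1)) - (T (t+1)).comp (fm (t+1))
        = (dD (t+1+1)).comp (U (t+1)) - (U t).comp (dA t) := by
  rintro ⟨U, hU⟩
  have h₁ := LinearMap.congr_fun (hU (-1)) (fun _ => 1)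
  have h := congrFun h₁ ⟨0, Nat.one_pos⟩
  change hm 1 (S 0 (fun _ => 1)) _ - T 0 (fm 0 (fun _ => 1)) _
    = dD 1 (U 0 (fun _ => 1)) _ - U (-1) (dA (-1) (fun _ => 1)) _ at h
  rw [nullhomotopy_gf_zero_apply_one S hS] at h
  simp only [hm, fm, dD, dA, mulVecLin_of_const_apply_one, map_smul] at h
  simp [rA, mulVecLin_of_const_apply] at h
  simp [rC] at h
  -- `h` now reads `1 - 2 * T₀(1) = 2 * U₀(1)`
  omega

theorem statement16 :
    -- the four graded objects are chain complexes:
    (∀ m : ℤ, (dA m).comp (dA (m+1)) = 0) ∧ (∀ m : ℤ, (dB m).comp (dB (m+1)) = 0) ∧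
    (∀ m : ℤ, (dC m).comp (dC (m+1)) = 0) ∧ (∀ m : ℤ, (dD m).comp (dD (m+1)) = 0) ∧
    -- f, g, h are chain maps:
    (∀ m : ℤ, (dB m).comp (fm (m+1)) = (fm m).comp (dA m)) ∧
    (∀ m : ℤ, (dC m).comp (gm (m+1)) = (gm m).comp (dB m)) ∧
    (∀ m : ℤ, (dD m).comp (hm (m+1)) = (hm m).comp (dC m)) ∧
    -- g∘f is nullhomotopic:
    (∃ S : ∀ t : ℤ, M rA t →ₗ[ℤ] M rC (t+1),
      ∀ t : ℤ, (gm (t+1)).comp (fm (t+1)) = (dC (t+1)).comp (S (t+1)) + (S t).comp (dA t)) ∧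
    -- h∘g is nullhomotopic:
    (∃ T : ∀ t : ℤ, M rB t →ₗ[ℤ] M rD (t+1),
      ∀ t : ℤ, (hm (t+1)).comp (gm (t+1)) = (dD (t+1)).comp (T (t+1)) + (T t).comp (dB t)) ∧
    -- for EVERY such S and T, the Toda map φ(S,T) : ΣA → D, with components
    -- φ out of (ΣA)_{t+1} = A_t given by h∘S − T∘f, is not chain homotopic to zero
    -- (the suspension differential being −∂_A):
    (∀ (S : ∀ t : ℤ, M rA t →ₗ[ℤ] M rC (t+1)) (T : ∀ t : ℤ, M rB t →ₗ[ℤ] M rD (t+1)),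
      (∀ t : ℤ, (gm (t+1)).comp (fm (t+1)) = (dC (t+1)).comp (S (t+1)) + (S t).comp (dA t)) →
      (∀ t : ℤ, (hm (t+1)).comp (gm (t+1)) = (dD (t+1)).comp (T (t+1)) + (T t).comp (dB t)) →
      ¬ ∃ U : ∀ t : ℤ, M rA t →ₗ[ℤ] M rD (t+1+1),
          ∀ t : ℤ, (hm (t+1+1)).comp (S (t+1)) - (T (t+1)).comp (fm (t+1))
            = (dD (t+1+1)).comp (U (t+1)) - (U t).comp (dA t)) := by
  refine ⟨dA_comp_dA, dB_comp_dB, dC_comp_dC, dD_comp_dD, dB_comp_fm, dC_comp_gm, dD_comp_hm,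
    ⟨nullhomotopyGF, gm_comp_fm_eq⟩, ⟨nullhomotopyHG, hm_comp_gm_eq⟩, ?_⟩
  intro S T hS _
  exact not_exists_toda_homotopy S T hS
end
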